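/- arXiv:2006.01640 — 11 statements merged into one kernel-verified Lean document; each statement's English description precedes it below -/
import Mathlib

section
/- Let 𝔅 be a bornology on a metric space X with closed base. If an open 𝔅^s-cover 𝒰 of X is expressed as a finite union 𝒰 = 𝒰₁ ∪ ⋯ ∪ 𝒰ₖ of subfamilies, then at least one 𝒰ᵢ is an open 𝔅^s-cover of X. -/
def IsBornologyOn {α : Type*} (𝔅 : Set (Set α)) : Prop :=
  (⋃₀ 𝔅 = Set.univ) ∧ (∀ B ∈ 𝔅, ∀ A ⊆ B, A ∈ 𝔅) ∧ (∀ A ∈ 𝔅, ∀ B ∈ 𝔅, A ∪ B ∈ 𝔅)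

def IsBaseFor {α : Type*} (𝔅 𝔅₀ : Set (Set α)) : Prop :=
  𝔅₀ ⊆ 𝔅 ∧ ∀ B ∈ 𝔅, ∃ B₀ ∈ 𝔅₀, B ⊆ B₀

def enl {α : Type*} [MetricSpace α] (B : Set α) (δ : ℝ) : Set α :=
  ⋃ x ∈ B, Metric.ball x δ

def BsCover {α : Type*} [MetricSpace α] (𝔅 𝒰 : Set (Set α)) : Prop :=
  (∀ u ∈ 𝒰, IsOpen u) ∧ Set.univ ∉ 𝒰 ∧
    ∀ B ∈ 𝔅, ∃ u ∈ 𝒰, ∃ δ > 0, enl B δ ⊆ u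


lemma aux_union_mem {α : Type*} (𝔅 : Set (Set α)) (hb : IsBornologyOn 𝔅)
    (hempty : (∅ : Set α) ∈ 𝔅) :
    ∀ k (B : Fin k → Set α), (∀ i, B i ∈ 𝔅) → (⋃ i, B i) ∈ 𝔅 := by
  intro k
  induction k with
  | zero => intro B _; simpa using hempty
  | succ n ih =>
    intro B hB
    have : (⋃ i : Fin (n + 1), B i) =
        (⋃ i : Fin n, B i.castSucc) ∪ B (Fin.last n) := by
      ext x
      simp only [Set.mem_iUnion, Set.mem_union]
      constructor
      · rintro ⟨i, hi⟩
        rcases Fin.eq_castSucc_or_eq_last i with ⟨j, rfl⟩ | rfl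
        · exact Or.inl ⟨j, hi⟩
        · exact Or.inr hi
      · rintro (⟨j, hj⟩ | h)
        · exact ⟨j.castSucc, hj⟩
        · exact ⟨Fin.last n, h⟩
    rw [this]
    exact hb.2.2 _ (ih _ (fun i => hB i.castSucc)) _ (hB (Fin.last n))

theorem stmt4 {X : Type*} [MetricSpace X] [Nonempty X]
    (𝔅 𝔅₀ : Set (Set X)) (hb : IsBornologyOn 𝔅) (hbase : IsBaseFor 𝔅 𝔅₀)
    (hcl : ∀ B ∈ 𝔅₀, IsClosed B)
    (k : ℕ) (Us : Fin k → Set (Set X)) (𝒰 : Set (Set X))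
    (h𝒰 : 𝒰 = ⋃ i, Us i) (hc : BsCover 𝔅 𝒰) :
    ∃ i, BsCover 𝔅 (Us i) := by
  obtain ⟨hopen, huniv, hcov⟩ := hc
  -- 𝔅 contains the empty set
  have hx : ∃ B, B ∈ 𝔅 := by
    have := hb.1
    have hmem : (Classical.arbitrary X) ∈ ⋃₀ 𝔅 := by rw [this]; trivial
    obtain ⟨B, hB, -⟩ := hmem
    exact ⟨B, hB⟩
  obtain ⟨B₁, hB₁⟩ := hx
  have hempty : (∅ : Set X) ∈ 𝔅 := hb.2.1 B₁ hB₁ ∅ (Set.empty_subset _)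
  by_contra hno
  push_neg at hno
  -- each Us i fails; openness and univ-freeness hold, so the cover condition fails
  have key : ∀ i, ∃ B ∈ 𝔅, ∀ u ∈ Us i, ∀ δ > 0, ¬ enl B δ ⊆ u := by
    intro i
    have h1 : ∀ u ∈ Us i, IsOpen u := fun u hu =>
      hopen u (h𝒰 ▸ Set.mem_iUnion.mpr ⟨i, hu⟩)
    have h2 : Set.univ ∉ Us i := fun h =>
      huniv (h𝒰 ▸ Set.mem_iUnion.mpr ⟨i, h⟩)
    by_contra hK
    push_neg at hK
    exact hno i ⟨h1, h2, hK⟩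
  choose Bf hBf hBf' using key
  -- the finite union of the Bf i is in 𝔅
  have hU : (⋃ i, Bf i) ∈ 𝔅 := aux_union_mem 𝔅 hb hempty k Bf hBf
  obtain ⟨u, hu, δ, hδ, hsub⟩ := hcov _ hU
  rw [h𝒰] at hu
  obtain ⟨i, hi⟩ := Set.mem_iUnion.mp hu
  refine hBf' i u hi δ hδ ?_
  refine subset_trans ?_ hsub
  intro y hy
  simp only [enl, Set.mem_iUnion] at hy ⊢
  obtain ⟨x, hx, hxy⟩ := hy
  exact ⟨x, ⟨i, hx⟩, hxy⟩
end

section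
/- Let 𝔅 be a bornology on a metric space X with a closed base 𝔅₀, and suppose X is 𝔅^s-Lindelöf. If |𝔅₀| < 𝔡 (the dominating number), then X satisfies S_fin(𝒪_{𝔅^s}, 𝒪_{𝔅^s}): for every sequence (𝒰ₙ) of countable open 𝔅^s-covers of X there are finite sets 𝒱ₙ ⊆ 𝒰ₙ such that ⋃ₙ 𝒱ₙ is an open 𝔅^s-cover of X. -/
def BsLindelof {α : Type*} [MetricSpace α] (𝔅 : Set (Set α)) : Prop :=
  ∀ 𝒰 : Set (Set α), BsCover 𝔅 𝒰 → ∃ 𝒱 ⊆ 𝒰, 𝒱.Countable ∧ BsCover 𝔅 𝒱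

def LeStar (f g : ℕ → ℕ) : Prop := ∀ᶠ n in Filter.atTop, f n ≤ g n

/-- The dominating number 𝔡. -/
noncomputable def cardD : Cardinal :=
  sInf { c : Cardinal | ∃ A : Set (ℕ → ℕ), c = Cardinal.mk A ∧
    ∀ g : ℕ → ℕ, ∃ f ∈ A, LeStar g f }

lemma not_dominating {ι : Type} (F : ι → ℕ → ℕ) (h : Cardinal.mk ι < cardD) :
    ∃ g : ℕ → ℕ, ∀ i, ¬ LeStar g (F i) := by
  by_contra hc
  push_neg at hc
  have hdom : ∀ g : ℕ → ℕ, ∃ f ∈ Set.range F, LeStar g f := by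
    intro g
    obtain ⟨i, hi⟩ := hc g
    exact ⟨F i, ⟨i, rfl⟩, hi⟩
  have hmem : Cardinal.mk (Set.range F) ∈ { c : Cardinal | ∃ A : Set (ℕ → ℕ),
      c = Cardinal.mk A ∧ ∀ g : ℕ → ℕ, ∃ f ∈ A, LeStar g f } :=
    ⟨Set.range F, rfl, hdom⟩
  have h1 : cardD ≤ Cardinal.mk (Set.range F) := csInf_le' hmem
  have h2 : Cardinal.mk (Set.range F) ≤ Cardinal.mk ι := Cardinal.mk_range_le
  exact absurd ((h1.trans h2)) (not_le.mpr h)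

lemma enl_mono {α : Type*} [MetricSpace α] {A B : Set α} (h : A ⊆ B) (δ : ℝ) :
    enl A δ ⊆ enl B δ :=
  Set.biUnion_subset_biUnion_left h

theorem stmt6 {X : Type} [MetricSpace X]
    (𝔅 𝔅₀ : Set (Set X)) (hb : IsBornologyOn 𝔅) (hbase : IsBaseFor 𝔅 𝔅₀)
    (hcl : ∀ B ∈ 𝔅₀, IsClosed B) (hlin : BsLindelof 𝔅)
    (hcard : Cardinal.mk 𝔅₀ < cardD) :
    ∀ U : ℕ → Set (Set X), (∀ n, (U n).Countable) → (∀ n, BsCover 𝔅 (U n)) →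
      ∃ V : ℕ → Set (Set X), (∀ n, V n ⊆ U n) ∧ (∀ n, (V n).Finite) ∧
        BsCover 𝔅 (⋃ n, V n) := by
  intro U hUc hUcov
  rcases eq_or_ne 𝔅 ∅ with h𝔅 | h𝔅
  · refine ⟨fun _ => ∅, fun n => Set.empty_subset _, fun n => Set.finite_empty, ?_, ?_, ?_⟩
    · intro u hu
      simp at hu
    · simp
    · intro B hB
      rw [h𝔅] at hB
      exact absurd hB (Set.notMem_empty B)
  · -- each U n is nonempty
    obtain ⟨B', hB'⟩ := Set.nonempty_iff_ne_empty.mpr h𝔅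
    have hne : ∀ n, (U n).Nonempty := by
      intro n
      obtain ⟨u, hu, _⟩ := (hUcov n).2.2 B' hB'
      exact ⟨u, hu⟩
    have henum : ∀ n, ∃ e : ℕ → Set X, U n = Set.range e := by
      intro n
      exact (hUc n).exists_eq_range (hne n)
    choose e he using henum
    -- define F : 𝔅₀ → ℕ → ℕ
    have hF : ∀ (B : 𝔅₀) (n : ℕ), ∃ k : ℕ, ∃ δ > 0, enl (B : Set X) δ ⊆ e n k := by
      intro B n
      obtain ⟨u, hu, δ, hδ, hsub⟩ := (hUcov n).2.2 B (hbase.1 B.2)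
      rw [he n] at hu
      obtain ⟨k, hk⟩ := hu
      exact ⟨k, δ, hδ, hk ▸ hsub⟩
    choose F hFspec using hF
    obtain ⟨g, hg⟩ := not_dominating F hcard
    refine ⟨fun n => e n '' {k | k ≤ g n}, ?_, ?_, ?_, ?_, ?_⟩
    · intro n
      rw [he n]
      exact Set.image_subset_range _ _
    · intro n
      exact (Set.finite_Iic (g n)).image _
    · intro u hu
      obtain ⟨n, hn⟩ := Set.mem_iUnion.mp hu
      have : u ∈ U n := by
        rw [he n]
        exact Set.image_subset_range _ _ hn
      exact (hUcov n).1 u this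
    · intro hu
      obtain ⟨n, hn⟩ := Set.mem_iUnion.mp hu
      have : Set.univ ∈ U n := by
        rw [he n]
        exact Set.image_subset_range _ _ hn
      exact (hUcov n).2.1 this
    · intro B hB
      obtain ⟨B₀, hB₀, hBB₀⟩ := hbase.2 B hB
      have hnd := hg ⟨B₀, hB₀⟩
      rw [LeStar, Filter.not_eventually] at hnd
      obtain ⟨n, hn⟩ := hnd.exists
      push_neg at hn
      obtain ⟨δ, hδ, hsub⟩ := hFspec ⟨B₀, hB₀⟩ n
      refine ⟨e n (F ⟨B₀, hB₀⟩ n), ?_, δ, hδ, ?_⟩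
      · exact Set.mem_iUnion.mpr ⟨n, ⟨F ⟨B₀, hB₀⟩ n, hn.le, rfl⟩⟩
      · exact (enl_mono hBB₀ δ).trans hsub
end

section
/- Let 𝔅 be a bornology on a metric space X with a closed base 𝔅₀. If |𝔅₀| < 𝔟 (the bounding number), then X satisfies S₁(Γ_{𝔅^s}, Γ_{𝔅^s}): for every sequence (𝒰ₙ) of γ_{𝔅^s}-covers of X, with 𝒰ₙ = {Uⁿ_m : m ∈ ℕ}, one can select Uⁿ_{g(n)} ∈ 𝒰ₙ such that {Uⁿ_{g(n)} : n ∈ ℕ} is a γ_{𝔅^s}-cover of X. -/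
def GammaBsCover {α : Type*} [MetricSpace α] (𝔅 : Set (Set α)) (U : ℕ → Set α) : Prop :=
  (∀ n, IsOpen (U n)) ∧ (∀ x : α, ∃ n, x ∈ U n) ∧
    ∀ B ∈ 𝔅, ∃ n₀ : ℕ, ∀ n ≥ n₀, ∃ δ > 0, enl B δ ⊆ U n

def S1_Gamma {α : Type*} [MetricSpace α] (𝔅 : Set (Set α)) : Prop :=
  ∀ U : ℕ → ℕ → Set α, (∀ n, GammaBsCover 𝔅 (U n)) →
    ∃ g : ℕ → ℕ, GammaBsCover 𝔅 (fun n => U n (g n))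

/-- The bounding number 𝔟. -/
noncomputable def cardB : Cardinal :=
  sInf { c : Cardinal | ∃ A : Set (ℕ → ℕ), c = Cardinal.mk A ∧
    ¬ ∃ g : ℕ → ℕ, ∀ f ∈ A, LeStar f g }

theorem stmt7 {X : Type} [MetricSpace X]
    (𝔅 𝔅₀ : Set (Set X)) (hb : IsBornologyOn 𝔅) (hbase : IsBaseFor 𝔅 𝔅₀)
    (hcl : ∀ B ∈ 𝔅₀, IsClosed B)
    (hcard : Cardinal.mk 𝔅₀ < cardB) :
    S1_Gamma 𝔅 := by
  intro U hU
  have hf : ∀ B : 𝔅₀, ∀ n, ∃ m, ∀ k ≥ m, ∃ δ > 0, enl (B : Set X) δ ⊆ U n k :=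
    fun B n => (hU n).2.2 B (hbase.1 B.2)
  choose f hf using hf
  obtain ⟨g, hg⟩ : ∃ g : ℕ → ℕ, ∀ h ∈ Set.range f, LeStar h g := by
    by_contra hcon
    have h1 : cardB ≤ Cardinal.mk (Set.range f) :=
      csInf_le' ⟨Set.range f, rfl, hcon⟩
    have h2 : Cardinal.mk (Set.range f) ≤ Cardinal.mk 𝔅₀ := Cardinal.mk_range_le
    exact absurd hcard (not_lt.2 (h1.trans h2))
  have key : ∀ B ∈ 𝔅, ∃ n₀, ∀ n ≥ n₀, ∃ δ > 0, enl B δ ⊆ U n (g n) := by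
    intro B hB
    obtain ⟨B₀, hB₀, hBB₀⟩ := hbase.2 B hB
    have hls := hg (f ⟨B₀, hB₀⟩) ⟨⟨B₀, hB₀⟩, rfl⟩
    obtain ⟨N, hN⟩ := Filter.eventually_atTop.1 hls
    refine ⟨N, fun n hn => ?_⟩
    obtain ⟨δ, hδ, hsub⟩ := hf ⟨B₀, hB₀⟩ n (g n) (hN n hn)
    refine ⟨δ, hδ, Set.Subset.trans ?_ hsub⟩
    exact Set.biUnion_subset_biUnion_left hBB₀
  refine ⟨g, fun n => (hU n).1 (g n), ?_, key⟩
  intro x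
  have hx : x ∈ ⋃₀ 𝔅 := hb.1 ▸ Set.mem_univ x
  obtain ⟨B, hB, hxB⟩ := hx
  obtain ⟨n₀, hn₀⟩ := key B hB
  obtain ⟨δ, hδ, hsub⟩ := hn₀ n₀ le_rfl
  exact ⟨n₀, hsub (Set.mem_biUnion hxB (Metric.mem_ball_self hδ))⟩
end

section
/- Let 𝔅 be a bornology on a metric space X with a closed base 𝔅₀. If |𝔅₀| < 𝔟, then X has the 𝔅^s-Hurewicz property: for every sequence (𝒰ₙ) of countable open 𝔅^s-covers of X there are finite sets 𝒱ₙ ⊆ 𝒰ₙ such that for every B ∈ 𝔅 there exist n₀ ∈ ℕ and positive reals δₙ (n ≥ n₀) with B^{δₙ} ⊆ U for some U ∈ 𝒱ₙ, for all n ≥ n₀. -/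
theorem stmt8 {X : Type} [MetricSpace X]
    (𝔅 𝔅₀ : Set (Set X)) (hb : IsBornologyOn 𝔅) (hbase : IsBaseFor 𝔅 𝔅₀)
    (hcl : ∀ B ∈ 𝔅₀, IsClosed B)
    (hcard : Cardinal.mk 𝔅₀ < cardB) :
    ∀ U : ℕ → Set (Set X), (∀ n, (U n).Countable) → (∀ n, BsCover 𝔅 (U n)) →
      ∃ V : ℕ → Set (Set X), (∀ n, V n ⊆ U n) ∧ (∀ n, (V n).Finite) ∧
        ∀ B ∈ 𝔅, ∃ n₀ : ℕ, ∀ n ≥ n₀, ∃ δ > 0, ∃ u ∈ V n, enl B δ ⊆ u := by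
  intro U hUc hUb
  by_cases hE : ∃ B, B ∈ 𝔅
  · obtain ⟨Bs, hBs⟩ := hE
    have hne : ∀ n, (U n).Nonempty := fun n => by
      obtain ⟨u, hu, _⟩ := (hUb n).2.2 _ hBs
      exact ⟨u, hu⟩
    choose e he using fun n => ((hUc n).exists_eq_range (hne n))
    have hsel : ∀ (B₀ : 𝔅₀) (n : ℕ), ∃ k, ∃ δ > 0, enl (B₀ : Set X) δ ⊆ e n k := by
      intro B₀ n
      obtain ⟨u, hu, δ, hδ, hsub⟩ := (hUb n).2.2 _ (hbase.1 B₀.2)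
      rw [he n] at hu
      obtain ⟨k, rfl⟩ := hu
      exact ⟨k, δ, hδ, hsub⟩
    choose f hf using hsel
    have hbound : ∃ g : ℕ → ℕ, ∀ h ∈ Set.range f, LeStar h g := by
      by_contra hcon
      have h1 : cardB ≤ Cardinal.mk (Set.range f) := csInf_le' ⟨Set.range f, rfl, hcon⟩
      have h2 : Cardinal.mk (Set.range f) ≤ Cardinal.mk 𝔅₀ := Cardinal.mk_range_le
      exact absurd hcard (not_lt.2 (le_trans h1 h2))
    obtain ⟨g, hg⟩ := hbound
    refine ⟨fun n => e n '' {k | k ≤ g n}, ?_, ?_, ?_⟩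
    · intro n; rw [he n]; exact Set.image_subset_range _ _
    · intro n; exact (Set.finite_Iic (g n)).image _
    · intro B hB
      obtain ⟨B₀, hB₀, hBsub⟩ := hbase.2 B hB
      obtain ⟨n₀, hn₀⟩ := Filter.eventually_atTop.1 (hg (f ⟨B₀, hB₀⟩) ⟨_, rfl⟩)
      refine ⟨n₀, fun n hn => ?_⟩
      obtain ⟨δ, hδ, hsub⟩ := hf ⟨B₀, hB₀⟩ n
      refine ⟨δ, hδ, e n (f ⟨B₀, hB₀⟩ n), ⟨_, hn₀ n hn, rfl⟩, ?_⟩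
      exact le_trans (Set.biUnion_subset_biUnion_left hBsub) hsub
  · push_neg at hE
    exact ⟨fun _ => ∅, fun n => Set.empty_subset _, fun n => Set.finite_empty,
      fun B hB => absurd hB (hE B)⟩
end

section
/- Let 𝔅 be a bornology on a metric space X with a compact base 𝔅₀. If X satisfies S₁(Γ_{𝔅^s}, Γ_{𝔅^s}), then for every continuous map φ : X → ℕ^ℕ (with the Baire metric), φ(X) is bounded in (ℕ^ℕ, ≤*): there exists h ∈ ℕ^ℕ with f ≤* h for all f ∈ φ(X). -/
theorem stmt9 {X : Type*} [MetricSpace X]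
    (𝔅 𝔅₀ : Set (Set X)) (hb : IsBornologyOn 𝔅) (hbase : IsBaseFor 𝔅 𝔅₀)
    (hcpt : ∀ B ∈ 𝔅₀, IsCompact B)
    (hsel : S1_Gamma 𝔅)
    (φ : X → (ℕ → ℕ)) (hφ : Continuous φ) :
    ∃ h : ℕ → ℕ, ∀ x : X, LeStar (φ x) h := by
  set U : ℕ → ℕ → Set X := fun n m => {x | φ x n < m} with hU
  have hUopen : ∀ n m, IsOpen (U n m) := fun n m =>
    (isOpen_discrete {k : ℕ | k < m}).preimage ((continuous_apply n).comp hφ)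
  have hγ : ∀ n, GammaBsCover 𝔅 (U n) := by
    intro n
    refine ⟨hUopen n, fun x => ⟨φ x n + 1, Nat.lt_succ_self _⟩, ?_⟩
    intro B hB
    obtain ⟨B₀, hB₀, hBB₀⟩ := hbase.2 B hB
    have hc := hcpt B₀ hB₀
    obtain ⟨m, hm⟩ := (hc.image ((continuous_apply n).comp hφ)).bddAbove
    refine ⟨m + 1, fun k hk => ?_⟩
    have hsub : B₀ ⊆ U n (m + 1) := fun x hx => Nat.lt_succ_of_le (hm ⟨x, hx, rfl⟩)
    obtain ⟨δ, hδpos, hδ⟩ := hc.exists_thickening_subset_open (hUopen n (m + 1)) hsub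
    refine ⟨δ, hδpos, fun y hy => ?_⟩
    have hmem : y ∈ Metric.thickening δ B₀ := by
      rw [Metric.thickening_eq_biUnion_ball]
      obtain ⟨x, hx, hyx⟩ := Set.mem_iUnion₂.1 hy
      exact Set.mem_biUnion (hBB₀ hx) hyx
    exact lt_of_lt_of_le (hδ hmem) hk
  obtain ⟨g, hg⟩ := hsel U hγ
  refine ⟨g, fun x => ?_⟩
  have hx𝔅 : {x} ∈ 𝔅 := by
    have hx : x ∈ ⋃₀ 𝔅 := hb.1 ▸ Set.mem_univ x
    obtain ⟨B, hB, hxB⟩ := hx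
    exact hb.2.1 B hB {x} (Set.singleton_subset_iff.2 hxB)
  obtain ⟨n₀, hn₀⟩ := hg.2.2 {x} hx𝔅
  refine Filter.eventually_atTop.2 ⟨n₀, fun n hn => ?_⟩
  obtain ⟨δ, hδpos, hδ⟩ := hn₀ n hn
  have hxe : x ∈ enl {x} δ :=
    Set.mem_biUnion (Set.mem_singleton x) (Metric.mem_ball_self hδpos)
  exact le_of_lt (hδ hxe)
end

section
/- Let 𝔅 be a bornology on a metric space X with a compact base 𝔅₀. If X has the 𝔅^s-Hurewicz property, then for every continuous map φ : X → ℕ^ℕ, the image φ(X) is bounded in (ℕ^ℕ, ≤*). -/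
def BsHurewicz {α : Type*} [MetricSpace α] (𝔅 : Set (Set α)) : Prop :=
  ∀ U : ℕ → Set (Set α), (∀ n, BsCover 𝔅 (U n)) →
    ∃ V : ℕ → Set (Set α), (∀ n, V n ⊆ U n) ∧ (∀ n, (V n).Finite) ∧
      ∀ B ∈ 𝔅, ∃ n₀ : ℕ, ∀ n ≥ n₀, ∃ δ > 0, ∃ u ∈ V n, enl B δ ⊆ u

theorem stmt10 {X : Type*} [MetricSpace X]
    (𝔅 𝔅₀ : Set (Set X)) (hb : IsBornologyOn 𝔅) (hbase : IsBaseFor 𝔅 𝔅₀)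
    (hcpt : ∀ B ∈ 𝔅₀, IsCompact B)
    (hH : BsHurewicz 𝔅)
    (φ : X → (ℕ → ℕ)) (hφ : Continuous φ) :
    ∃ h : ℕ → ℕ, ∀ x : X, LeStar (φ x) h := by
  classical
  set O : ℕ → ℕ → Set X := fun n m => {x | φ x n < m} with hOdef
  have hOopen : ∀ n m, IsOpen (O n m) := by
    intro n m
    have hc : Continuous fun x => φ x n := (continuous_apply n).comp hφ
    exact isOpen_lt hc continuous_const
  set Sn : ℕ → Prop := fun n => ∃ m, ∀ x, φ x n < m with hSndef
  by_cases hS : ∀ n, Sn n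
  · exact ⟨fun n => (hS n).choose,
      fun x => Filter.Eventually.of_forall fun n => le_of_lt ((hS n).choose_spec x)⟩
  push_neg at hS
  obtain ⟨n₁, hn₁⟩ := hS
  set Ucov : ℕ → Set (Set X) := fun n => {u | ∃ m, u = O n m ∧ u ≠ Set.univ} with hUdef
  have hcov : ∀ k, ¬ Sn k → BsCover 𝔅 (Ucov k) := by
    intro k hk
    refine ⟨?_, ?_, ?_⟩
    · rintro u ⟨m, rfl, -⟩; exact hOopen k m
    · rintro ⟨m, -, hne⟩; exact hne rfl
    · intro B hB
      obtain ⟨B₀, hB₀, hBB₀⟩ := hbase.2 B hB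
      have hBcpt := hcpt B₀ hB₀
      have hbound : ∃ M, B₀ ⊆ O k M := by
        rcases Set.eq_empty_or_nonempty B₀ with h0 | h0
        · exact ⟨1, by simp [h0]⟩
        · obtain ⟨z, hz, hzmax⟩ := hBcpt.exists_isMaxOn h0
            ((continuous_apply k).comp hφ).continuousOn
          exact ⟨φ z k + 1, fun y hy => Nat.lt_succ_of_le (hzmax hy)⟩
      obtain ⟨M, hM⟩ := hbound
      have hne : O k M ≠ Set.univ := by
        intro h
        exact hk ⟨M, fun x => by
          have : x ∈ O k M := h ▸ Set.mem_univ x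
          exact this⟩
      obtain ⟨δ, hδpos, hδ⟩ := hBcpt.exists_thickening_subset_open (hOopen k M) hM
      refine ⟨O k M, ⟨M, rfl, hne⟩, δ, hδpos, ?_⟩
      intro y hy
      apply hδ
      rw [Metric.thickening_eq_biUnion_ball]
      rcases Set.mem_iUnion₂.1 hy with ⟨z, hz, hyz⟩
      exact Set.mem_iUnion₂.2 ⟨z, hBB₀ hz, hyz⟩
  set U' : ℕ → Set (Set X) := fun n => if Sn n then Ucov n₁ else Ucov n with hU'def
  have hU' : ∀ n, BsCover 𝔅 (U' n) := by
    intro n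
    by_cases h : Sn n
    · simp only [hU'def, if_pos h]
      exact hcov n₁ hn₁
    · simp only [hU'def, if_neg h]
      exact hcov n h
  obtain ⟨V, hVsub, hVfin, hVcov⟩ := hH U' hU'
  set g : ℕ → Set X → ℕ := fun n u => if h : ∃ m, u = O n m then h.choose else 0 with hgdef
  refine ⟨fun n => if hs : Sn n then hs.choose else (hVfin n).toFinset.sup (g n), ?_⟩
  intro x
  have hx : x ∈ ⋃₀ 𝔅 := hb.1.symm ▸ Set.mem_univ x
  obtain ⟨B', hB', hxB'⟩ := hx
  have hxmem : ({x} : Set X) ∈ 𝔅 := hb.2.1 B' hB' {x} (by simpa)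
  obtain ⟨n₀, hn₀⟩ := hVcov {x} hxmem
  rw [LeStar, Filter.eventually_atTop]
  refine ⟨n₀, fun n hn => ?_⟩
  by_cases hs : Sn n
  · simp only [dif_pos hs]
    exact le_of_lt (hs.choose_spec x)
  · simp only [dif_neg hs]
    obtain ⟨δ, hδ, u, huV, hsub⟩ := hn₀ n hn
    have hxu : x ∈ u := by
      apply hsub
      exact Set.mem_iUnion₂.2 ⟨x, rfl, Metric.mem_ball_self hδ⟩
    have huU : u ∈ Ucov n := by
      have := hVsub n huV
      simpa only [hU'def, if_neg hs] using this
    obtain ⟨m, hum, -⟩ := huU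
    have hex : ∃ m, u = O n m := ⟨m, hum⟩
    have hgu : u = O n (g n u) := by
      simp only [hgdef, dif_pos hex]
      exact hex.choose_spec
    have hlt : φ x n < g n u := by
      have := hgu ▸ hxu
      exact this
    exact le_trans (le_of_lt hlt) (Finset.le_sup ((hVfin n).mem_toFinset.mpr huV))
end

section
/- Let 𝔅 be a bornology on a metric space X with a compact base 𝔅₀. If X satisfies S_fin(𝒪_{𝔅^s}, 𝒪_{𝔅^s}), then for every continuous map φ : X → ℕ^ℕ, the image φ(X) is not a dominating family in (ℕ^ℕ, ≤*). -/
/-- The selection principle S_fin(𝒪_{𝔅^s}, 𝒪_{𝔅^s}). -/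
def SfinO {α : Type*} [MetricSpace α] (𝔅 : Set (Set α)) : Prop :=
  ∀ U : ℕ → Set (Set α), (∀ n, BsCover 𝔅 (U n)) →
    ∃ V : ℕ → Set (Set α), (∀ n, V n ⊆ U n) ∧ (∀ n, (V n).Finite) ∧
      BsCover 𝔅 (⋃ n, V n)

theorem stmt11 {X : Type*} [MetricSpace X]
    (𝔅 𝔅₀ : Set (Set X)) (hb : IsBornologyOn 𝔅) (hbase : IsBaseFor 𝔅 𝔅₀)
    (hcpt : ∀ B ∈ 𝔅₀, IsCompact B)
    (hS : SfinO 𝔅)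
    (φ : X → (ℕ → ℕ)) (hφ : Continuous φ) :
    ¬ (∀ g : ℕ → ℕ, ∃ x : X, LeStar g (φ x)) := by
  classical
  intro hdom
  -- singletons belong to the bornology
  have hsing : ∀ x : X, {x} ∈ 𝔅 := by
    intro x
    have hx : x ∈ ⋃₀ 𝔅 := hb.1.symm ▸ Set.mem_univ x
    obtain ⟨B, hB, hxB⟩ := hx
    exact hb.2.1 B hB {x} (Set.singleton_subset_iff.2 hxB)
  -- case split: some coordinate is unbounded, or all are bounded
  by_cases hub : ∃ j₀ : ℕ, ∀ k : ℕ, ∃ x : X, k ≤ φ x j₀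
  · obtain ⟨j₀, hj₀⟩ := hub
    -- the basic sets of our covers
    set S : ℕ → ℕ → Set X := fun j k => {x | φ x j < k ∧ φ x j₀ < k} with hSdef
    have Sopen : ∀ j k, IsOpen (S j k) := by
      intro j k
      have h1 : IsOpen ((fun x => φ x j) ⁻¹' Set.Iio k) :=
        (isOpen_Iio).preimage ((continuous_apply j).comp hφ)
      have h2 : IsOpen ((fun x => φ x j₀) ⁻¹' Set.Iio k) :=
        (isOpen_Iio).preimage ((continuous_apply j₀).comp hφ)
      exact h1.inter h2
    have Sne : ∀ j k, S j k ≠ Set.univ := by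
      intro j k h
      obtain ⟨x, hx⟩ := hj₀ k
      have hm : x ∈ S j k := h ▸ Set.mem_univ x
      have := hm.2
      omega
    have Smono : ∀ j {k k'}, k ≤ k' → S j k ⊆ S j k' := by
      intro j k k' hkk' x hx
      exact ⟨lt_of_lt_of_le hx.1 hkk', lt_of_lt_of_le hx.2 hkk'⟩
    -- each family {S j k : k ∈ ℕ} is an open 𝔅ˢ-cover
    have hcov : ∀ j, BsCover 𝔅 (Set.range (S j)) := by
      intro j
      refine ⟨?_, ?_, ?_⟩
      · rintro u ⟨k, rfl⟩; exact Sopen j k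
      · rintro ⟨k, hk⟩; exact Sne j k hk
      · intro B hB
        obtain ⟨B₀, hB₀, hBB₀⟩ := hbase.2 B hB
        have hB₀c := hcpt B₀ hB₀
        -- find a bound for φ on B₀ at coordinates j and j₀
        have hbound : ∃ k : ℕ, B₀ ⊆ S j k := by
          rcases Set.eq_empty_or_nonempty B₀ with he | hne
          · exact ⟨0, by simp [he]⟩
          · obtain ⟨z, hz, hzmax⟩ := hB₀c.exists_isMaxOn hne
              (Continuous.continuousOn (by fun_prop :
                Continuous fun x => max (φ x j) (φ x j₀)))
            refine ⟨max (φ z j) (φ z j₀) + 1, ?_⟩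
            intro y hy
            have := hzmax hy
            simp only [Set.mem_setOf_eq] at this ⊢
            constructor <;> omega
        obtain ⟨k, hk⟩ := hbound
        obtain ⟨δ, hδ, hδsub⟩ := hB₀c.exists_thickening_subset_open (Sopen j k) hk
        refine ⟨S j k, ⟨k, rfl⟩, δ, hδ, ?_⟩
        intro y hy
        obtain ⟨x, hxB, hxy⟩ := Set.mem_iUnion₂.1 hy
        exact hδsub (Metric.ball_subset_thickening (hBB₀ hxB) δ hxy)
    -- key step: for every i, a guessing function with dips beyond i
    have key : ∀ i : ℕ, ∃ e : ℕ → ℕ, ∀ x : X, ∃ m, i ≤ m ∧ φ x m < e m := by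
      intro i
      obtain ⟨V, hVsub, hVfin, hVcov⟩ :=
        hS (fun n => Set.range (S (n + i))) (fun n => hcov (n + i))
      have hKex : ∀ n, ∃ K : ℕ, ∀ u ∈ V n, u ⊆ S (n + i) K := by
        intro n
        set kf : Set X → ℕ := fun u =>
          if h : ∃ k, S (n + i) k = u then h.choose else 0 with hkf
        refine ⟨(hVfin n).toFinset.sup kf, ?_⟩
        intro u hu
        obtain ⟨k, hk⟩ := hVsub n hu
        have hex : ∃ k, S (n + i) k = u := ⟨k, hk⟩
        have hueq : S (n + i) (kf u) = u := by
          rw [hkf]; simp only [dif_pos hex]; exact hex.choose_spec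
        have hle : kf u ≤ (hVfin n).toFinset.sup kf :=
          Finset.le_sup ((hVfin n).mem_toFinset.2 hu)
        rw [← hueq]
        exact Smono _ hle
      choose K hK using hKex
      refine ⟨fun m => if h : i ≤ m then K (m - i) else 0, ?_⟩
      intro x
      obtain ⟨u, hu, δ, hδ, hsub⟩ := hVcov.2.2 {x} (hsing x)
      obtain ⟨n, hun⟩ := Set.mem_iUnion.1 hu
      have hxu : x ∈ u := by
        apply hsub
        exact Set.mem_biUnion (Set.mem_singleton x) (Metric.mem_ball_self hδ)
      have hxS : x ∈ S (n + i) (K n) := hK n u hun hxu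
      refine ⟨n + i, Nat.le_add_left i n, ?_⟩
      simp only [Nat.le_add_left, dif_pos, Nat.add_sub_cancel]
      exact hxS.1
    choose E hE using key
    obtain ⟨x, hx⟩ := hdom (fun m => (Finset.range (m + 1)).sup (fun i => E i m) + 1)
    obtain ⟨N, hN⟩ := Filter.eventually_atTop.1 hx
    obtain ⟨m, hm, hlt⟩ := hE N x
    have h1 : (Finset.range (m + 1)).sup (fun i => E i m) + 1 ≤ φ x m := hN m hm
    have h2 : E N m ≤ (Finset.range (m + 1)).sup (fun i => E i m) :=
      Finset.le_sup (f := fun i => E i m) (Finset.mem_range.2 (Nat.lt_succ_of_le hm))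
    have h3 : φ x m < φ x m :=
      lt_of_lt_of_le (lt_of_lt_of_le hlt h2) (le_trans (Nat.le_succ _) h1)
    exact absurd h3 (lt_irrefl _)
  · -- all coordinates bounded: contradiction with domination directly
    push_neg at hub
    choose c hc using hub
    obtain ⟨x, hx⟩ := hdom c
    obtain ⟨N, hN⟩ := Filter.eventually_atTop.1 hx
    have h1 := hN N le_rfl
    have h2 := hc N x
    omega
end

section
/- Let 𝔅 be a bornology on a metric space X with compact base. Then X satisfies S₁(𝒪_{𝔅^s}, 𝒪_{𝔅^s}) if and only if for every n ∈ ℕ, X^n (with the max product metric and product bornology 𝔅ⁿ) satisfies S₁(𝒪_{(𝔅ⁿ)^s}, 𝒪_{(𝔅ⁿ)^s}). -/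
def S1_O {α : Type*} [MetricSpace α] (𝔅 : Set (Set α)) : Prop :=
  ∀ U : ℕ → Set (Set α), (∀ n, BsCover 𝔅 (U n)) →
    ∃ f : ℕ → Set α, (∀ n, f n ∈ U n) ∧ BsCover 𝔅 (Set.range f)

def cube {α : Type*} (n : ℕ) (B : Set α) : Set (Fin n → α) := {y | ∀ i, y i ∈ B}

def bornPow {α : Type*} (n : ℕ) (𝔅 : Set (Set α)) : Set (Set (Fin n → α)) :=
  {C | ∃ B ∈ 𝔅, C ⊆ cube n B}

lemma mem_enl_iff {α : Type*} [MetricSpace α] {B : Set α} {δ : ℝ} {y : α} :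
    y ∈ enl B δ ↔ ∃ x ∈ B, dist y x < δ := by
  simp [enl, Metric.mem_ball]

lemma enl_isOpen {α : Type*} [MetricSpace α] (B : Set α) (δ : ℝ) : IsOpen (enl B δ) :=
  isOpen_biUnion fun _ _ => Metric.isOpen_ball

theorem stmt14 {X : Type*} [MetricSpace X]
    (𝔅 𝔅₀ : Set (Set X)) (hb : IsBornologyOn 𝔅) (hbase : IsBaseFor 𝔅 𝔅₀)
    (hcpt : ∀ B ∈ 𝔅₀, IsCompact B) :
    S1_O 𝔅 ↔ ∀ n : ℕ, 0 < n → S1_O (bornPow n 𝔅) := by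
  constructor
  · -- forward direction
    intro hS n hn U hU
    -- refine each cover of X^n to a cover of X
    set V : ℕ → Set (Set X) := fun m => {v | IsOpen v ∧ ∃ u ∈ U m, cube n v ⊆ u} with hVdef
    have hVcov : ∀ m, BsCover 𝔅 (V m) := by
      intro m
      obtain ⟨hop, huniv, hcov⟩ := hU m
      refine ⟨fun v hv => hv.1, ?_, ?_⟩
      · rintro ⟨-, u, hu, hsub⟩
        have : u = Set.univ := Set.eq_univ_of_univ_subset
          (fun y _ => hsub (fun i => Set.mem_univ _))
        exact huniv (this ▸ hu)
      · intro B hB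
        obtain ⟨u, hu, δ, hδ, hsub⟩ := hcov (cube n B) ⟨B, hB, subset_rfl⟩
        refine ⟨enl B (δ/2), ⟨enl_isOpen _ _, u, hu, ?_⟩, δ/2, by linarith, subset_rfl⟩
        intro y hy
        have : ∀ i, ∃ b ∈ B, dist (y i) b < δ/2 := fun i => mem_enl_iff.1 (hy i)
        choose z hz hzd using this
        apply hsub
        refine mem_enl_iff.2 ⟨z, hz, ?_⟩
        rw [dist_pi_lt_iff hδ]
        exact fun i => lt_of_lt_of_le (hzd i) (by linarith)
    obtain ⟨g, hg, hgcov⟩ := hS V hVcov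
    have hsel : ∀ m, ∃ u ∈ U m, cube n (g m) ⊆ u := fun m => (hg m).2
    choose u hu hsub using hsel
    refine ⟨u, hu, ?_, ?_, ?_⟩
    · rintro w ⟨m, rfl⟩; exact (hU m).1 _ (hu m)
    · rintro ⟨m, hm⟩; exact (hU m).2.1 (hm ▸ hu m)
    · rintro C ⟨B, hB, hCB⟩
      obtain ⟨v, ⟨m, rfl⟩, δ, hδ, hBv⟩ := hgcov.2.2 B hB
      refine ⟨u m, ⟨m, rfl⟩, δ, hδ, ?_⟩
      intro y hy
      obtain ⟨z, hzC, hzd⟩ := mem_enl_iff.1 hy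
      apply hsub m
      intro i
      have hzi : z i ∈ B := hCB hzC i
      have : dist (y i) (z i) < δ := lt_of_le_of_lt (dist_le_pi_dist y z i) hzd
      exact hBv (mem_enl_iff.2 ⟨z i, hzi, this⟩)
  · -- reverse direction: use n = 1
    intro h U hU
    have h1 := h 1 one_pos
    set W : ℕ → Set (Set (Fin 1 → X)) :=
      fun m => (fun u => (fun y : Fin 1 → X => y 0) ⁻¹' u) '' U m with hWdef
    have hWcov : ∀ m, BsCover (bornPow 1 𝔅) (W m) := by
      intro m
      obtain ⟨hop, huniv, hcov⟩ := hU m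
      refine ⟨?_, ?_, ?_⟩
      · rintro w ⟨u, hu, rfl⟩
        exact (hop u hu).preimage (continuous_apply 0)
      · rintro ⟨u, hu, hequ⟩
        have : u = Set.univ := by
          apply Set.eq_univ_of_forall
          intro x
          have hequ' : (fun y : Fin 1 → X => y 0) ⁻¹' u = Set.univ := hequ
          have : (fun _ : Fin 1 => x) ∈ (fun y : Fin 1 → X => y 0) ⁻¹' u := by
            rw [hequ']; trivial
          exact this
        exact huniv (this ▸ hu)
      · rintro C ⟨B, hB, hCB⟩
        obtain ⟨v, hv, δ, hδ, hBv⟩ := hcov B hB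
        refine ⟨_, ⟨v, hv, rfl⟩, δ, hδ, ?_⟩
        intro y hy
        obtain ⟨z, hzC, hzd⟩ := mem_enl_iff.1 hy
        have : dist (y 0) (z 0) < δ := lt_of_le_of_lt (dist_le_pi_dist y z 0) hzd
        exact hBv (mem_enl_iff.2 ⟨z 0, hCB hzC 0, this⟩)
    obtain ⟨f, hf, hfcov⟩ := h1 W hWcov
    have hsel : ∀ m, ∃ u ∈ U m, f m = (fun y : Fin 1 → X => y 0) ⁻¹' u := by
      intro m
      obtain ⟨u, hu, hequ⟩ := hf m
      exact ⟨u, hu, hequ.symm⟩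
    choose u hu hequ using hsel
    refine ⟨u, hu, ?_, ?_, ?_⟩
    · rintro w ⟨m, rfl⟩; exact (hU m).1 _ (hu m)
    · rintro ⟨m, hm⟩; exact (hU m).2.1 (hm ▸ hu m)
    · intro B hB
      obtain ⟨v, ⟨m, rfl⟩, δ, hδ, hBv⟩ := hfcov.2.2 (cube 1 B) ⟨B, hB, subset_rfl⟩
      refine ⟨u m, ⟨m, rfl⟩, δ, hδ, ?_⟩
      intro x hx
      obtain ⟨b, hbB, hbd⟩ := mem_enl_iff.1 hx
      have hmem : (fun _ : Fin 1 => x) ∈ f m := by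
        apply hBv
        refine mem_enl_iff.2 ⟨fun _ => b, fun i => hbB, ?_⟩
        rw [dist_pi_lt_iff hδ]
        exact fun i => hbd
      rw [hequ m] at hmem
      exact hmem
end

section
/- Let 𝔅 be a bornology on a metric space X with closed base. Then X has the 𝔅^s-Gerlits–Nagy property (i.e., X satisfies S₁(𝒪_{𝔅^s}, 𝒪_{𝔅^s}^{gp})) if and only if X has the 𝔅^s-Hurewicz property and X satisfies S₁(𝒪_{𝔅^s}, 𝒪_{𝔅^s}). -/
def BsGroupable {α : Type*} [MetricSpace α] (𝔅 𝒰 : Set (Set α)) : Prop :=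
  (∀ u ∈ 𝒰, IsOpen u) ∧ ⋃₀ 𝒰 = Set.univ ∧
    ∃ V : ℕ → Set (Set α), (∀ n, (V n).Finite) ∧
      (∀ m n, m ≠ n → Disjoint (V m) (V n)) ∧ (⋃ n, V n) = 𝒰 ∧
      ∀ B ∈ 𝔅, ∃ n₀ : ℕ, ∀ n ≥ n₀, ∃ δ > 0, ∃ u ∈ V n, enl B δ ⊆ u

def S1_GN {α : Type*} [MetricSpace α] (𝔅 : Set (Set α)) : Prop :=
  ∀ U : ℕ → Set (Set α), (∀ n, BsCover 𝔅 (U n)) →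
    ∃ f : ℕ → Set α, (∀ n, f n ∈ U n) ∧ BsGroupable 𝔅 (Set.range f)

/-
`S₁(𝒪_𝔅ˢ, 𝒪_𝔅ˢ^gp)` implies Hurewicz: select from the covers by the intersections of one member
of each of `U₀, …, Uₙ`. The selected sets carry pairwise disjoint finite groups of indices, and a
`B` eventually fits into a member of every group; among the groups `j₀, …, 2n` some good index is
therefore `≥ n`, and the corresponding intersection lies inside a member of `Uₙ`.

Conversely, the cover `{e k}` selected by `S₁(𝒪_𝔅ˢ, 𝒪_𝔅ˢ)` is infinite (finite sets are bounded)
and, enumerated injectively, its tails `{e k : k ≥ n}` are again `𝔅ˢ`-covers. The Hurewicz property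
applied to the tails gives finite sets of indices, which can be packed into consecutive blocks
`[m k, m (k + 1))`; the blocks are the groups.
-/

open Set Function

lemma Set.Countable.exists_injective_range_eq {α : Type*} {s : Set α} (hs : s.Countable)
    (hi : s.Infinite) : ∃ e : ℕ → α, Injective e ∧ range e = s := by
  obtain ⟨_⟩ := countable_infinite_iff_nonempty_denumerable.1 ⟨hs, hi⟩
  let σ := (Denumerable.eqv s).symm
  exact ⟨Subtype.val ∘ σ, Subtype.val_injective.comp σ.injective, by
    rw [range_comp, σ.range_eq_univ, image_univ, Subtype.range_coe]⟩

lemma Nat.exists_mem_Icc_le_of_pairwise_disjoint {K : ℕ → Set ℕ}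
    (hK : Pairwise (Disjoint on K)) {a b n : ℕ} (hab : a + n ≤ b)
    (hne : ∀ j ∈ Icc a b, (K j).Nonempty) : ∃ j ∈ Icc a b, ∃ k ∈ K j, n ≤ k := by
  by_contra! hlt
  choose! k hk using hne
  have hmaps : MapsTo k (Finset.Icc a b) (Finset.range n) := fun j hj => by
    rw [Finset.coe_Icc] at hj
    simpa using hlt j hj (k j) (hk j hj)
  have hcard : (Finset.range n).card < (Finset.Icc a b).card := by
    simp only [Nat.card_Icc, Finset.card_range]; omega
  obtain ⟨j, hj, j', hj', hne, hkj⟩ := Finset.exists_ne_map_eq_of_card_lt_of_maps_to hcard hmaps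
  rw [Finset.mem_Icc, ← mem_Icc] at hj hj'
  exact disjoint_left.1 (hK hne) (hk j hj) (hkj ▸ hk j' hj')

lemma Nat.exists_strictMono_forall_subset_Ico {I : ℕ → Set ℕ} (hfin : ∀ n, (I n).Finite)
    (hI : ∀ n, I n ⊆ Ici n) :
    ∃ m : ℕ → ℕ, StrictMono m ∧ m 0 = 0 ∧ ∀ k, I (m k) ⊆ Ico (m k) (m (k + 1)) := by
  have hbound : ∀ n, ∃ b, I n ⊆ Iio b := fun n => by
    obtain ⟨b, hb⟩ := (hfin n).bddAbove
    exact ⟨b + 1, fun i hi => Nat.lt_succ_of_le (hb hi)⟩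
  choose b hb using hbound
  let m : ℕ → ℕ := fun k => Nat.rec 0 (fun _ mk => max (mk + 1) (b mk)) k
  have hm : ∀ k, m (k + 1) = max (m k + 1) (b (m k)) := fun _ => rfl
  refine ⟨m, strictMono_nat_of_lt_succ fun k => ?_, rfl, fun k i hi => ⟨hI _ hi, ?_⟩⟩
  · rw [hm]; omega
  · have := hb (m k) hi
    rw [mem_Iio] at this
    rw [hm]; omega

lemma StrictMono.iUnion_Ico_eq_univ {m : ℕ → ℕ} (hm : StrictMono m) (h0 : m 0 = 0) :
    ⋃ k, Ico (m k) (m (k + 1)) = univ := by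
  simpa [h0] using iUnion_Ico_map_succ_eq_Ici (fun a => hm.monotone (Nat.zero_le a))
    hm.not_bddAbove_range_of_wellFoundedLT

namespace IsBornologyOn

variable {α : Type*} {𝔅 : Set (Set α)}

lemma singleton_mem (hb : IsBornologyOn 𝔅) (x : α) : {x} ∈ 𝔅 := by
  obtain ⟨B, hB, hxB⟩ : x ∈ ⋃₀ 𝔅 := hb.1 ▸ mem_univ x
  exact hb.2.1 B hB {x} (singleton_subset_iff.2 hxB)

lemma finite_mem [Nonempty α] (hb : IsBornologyOn 𝔅) {s : Set α} (hs : s.Finite) : s ∈ 𝔅 := by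
  induction s, hs using Set.Finite.induction_on with
  | empty => exact hb.2.1 _ (hb.singleton_mem (Classical.arbitrary α)) ∅ (empty_subset _)
  | insert _ _ ih => exact insert_eq .. ▸ hb.2.2 _ (hb.singleton_mem _) _ ih

end IsBornologyOn

section Metric

variable {X : Type*} [MetricSpace X] {𝔅 : Set (Set X)}

lemma subset_enl (B : Set X) {δ : ℝ} (hδ : 0 < δ) : B ⊆ enl B δ :=
  fun _ hx => mem_biUnion hx (Metric.mem_ball_self hδ)

lemma enl_mono_s16 {B B' : Set X} {δ δ' : ℝ} (hB : B ⊆ B') (hδ : δ ≤ δ') :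
    enl B δ ⊆ enl B' δ' :=
  biUnion_mono hB fun _ _ => Metric.ball_subset_ball hδ

namespace BsCover

lemma exists_notMem {𝒰 : Set (Set X)} (hc : BsCover 𝔅 𝒰) {u : Set X} (hu : u ∈ 𝒰) :
    ∃ x, x ∉ u :=
  (ne_univ_iff_exists_notMem u).1 fun h => hc.2.1 (h ▸ hu)

lemma sUnion_eq_univ {𝒰 : Set (Set X)} (hb : IsBornologyOn 𝔅) (hc : BsCover 𝔅 𝒰) :
    ⋃₀ 𝒰 = univ := by
  refine eq_univ_of_forall fun x => ?_
  obtain ⟨u, hu, δ, hδ, hsub⟩ := hc.2.2 _ (hb.singleton_mem x)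
  exact ⟨u, hu, hsub (subset_enl _ hδ rfl)⟩

/-- A point outside each member of a finite cover would give a bounded set covered by none. -/
lemma infinite [Nonempty X] {𝒰 : Set (Set X)} (hb : IsBornologyOn 𝔅) (hc : BsCover 𝔅 𝒰) :
    𝒰.Infinite := by
  intro hfin
  choose! x hx using fun u (hu : u ∈ 𝒰) => hc.exists_notMem hu
  obtain ⟨u, hu, δ, hδ, hsub⟩ := hc.2.2 _ (hb.finite_mem (hfin.image x))
  exact hx u hu (hsub (subset_enl _ hδ (mem_image_of_mem x hu)))

lemma image_Ici [Nonempty X] {e : ℕ → Set X} (hb : IsBornologyOn 𝔅) (hc : BsCover 𝔅 (range e))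
    (n : ℕ) : BsCover 𝔅 (e '' Ici n) := by
  choose x hx using fun m => hc.exists_notMem (mem_range_self m)
  refine ⟨fun u hu => hc.1 u (image_subset_range e _ hu),
    fun h => hc.2.1 (image_subset_range e _ h), fun B hB => ?_⟩
  -- enlarging `B` by the points `x i ∉ e i`, `i < n`, forces the covering index to be `≥ n`
  obtain ⟨_, ⟨m, rfl⟩, δ, hδ, hsub⟩ :=
    hc.2.2 _ (hb.2.2 B hB _ (hb.finite_mem ((finite_Iio n).image x)))
  have hm : n ≤ m := by
    by_contra! hmn
    exact hx m (hsub (subset_enl _ hδ (Or.inr (mem_image_of_mem x hmn))))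
  exact ⟨e m, mem_image_of_mem e hm, δ, hδ, (enl_mono_s16 subset_union_left le_rfl).trans hsub⟩

end BsCover

lemma bsCover_biInter_Iic {U : ℕ → Set (Set X)} (hU : ∀ n, BsCover 𝔅 (U n)) (n : ℕ) :
    BsCover 𝔅 {s | ∃ c : ℕ → Set X, (∀ i, c i ∈ U i) ∧ s = ⋂ i ∈ Finset.Iic n, c i} := by
  refine ⟨?_, ?_, fun B hB => ?_⟩
  · rintro _ ⟨c, hc, rfl⟩
    exact isOpen_biInter_finset fun i _ => (hU i).1 _ (hc i)
  · rintro ⟨c, hc, hceq⟩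
    refine (hU 0).2.1 (eq_univ_of_univ_subset ?_ ▸ hc 0)
    exact hceq ▸ iInter₂_subset 0 (Finset.mem_Iic.2 n.zero_le)
  · choose c hc δ hδ hsub using fun i => (hU i).2.2 B hB
    have hne : (Finset.Iic n).Nonempty := ⟨0, Finset.mem_Iic.2 n.zero_le⟩
    refine ⟨_, ⟨c, hc, rfl⟩, (Finset.Iic n).inf' hne δ,
      (Finset.lt_inf'_iff hne).2 fun i _ => hδ i, subset_iInter₂ fun i hi => ?_⟩
    exact (enl_mono_s16 subset_rfl (Finset.inf'_le δ hi)).trans (hsub i)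

namespace BsGroupable

lemma bsCover {𝒰 : Set (Set X)} (hg : BsGroupable 𝔅 𝒰) (hU : univ ∉ 𝒰) : BsCover 𝔅 𝒰 := by
  obtain ⟨hopen, -, V, -, -, hVU, hV⟩ := hg
  refine ⟨hopen, hU, fun B hB => ?_⟩
  obtain ⟨n₀, hn₀⟩ := hV B hB
  obtain ⟨δ, hδ, u, hu, hsub⟩ := hn₀ n₀ le_rfl
  exact ⟨u, hVU ▸ mem_iUnion.2 ⟨n₀, hu⟩, δ, hδ, hsub⟩

lemma exists_index_groups {g : ℕ → Set X} (hg : BsGroupable 𝔅 (range g)) :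
    ∃ K : ℕ → Set ℕ, (∀ j, (K j).Finite) ∧ Pairwise (Disjoint on K) ∧
      ∀ B ∈ 𝔅, ∃ j₀, ∀ j ≥ j₀, ∃ k ∈ K j, ∃ δ > 0, enl B δ ⊆ g k := by
  obtain ⟨-, -, G, hGfin, hGdisj, hGU, hG⟩ := hg
  have hinv : ∀ j, ∀ u ∈ G j, g (invFun g u) = u := fun j u hu =>
    invFun_eq (hGU ▸ mem_iUnion.2 ⟨j, hu⟩ : u ∈ range g)
  refine ⟨fun j => invFun g '' G j, fun j => (hGfin j).image _, fun i j hij => ?_,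
    fun B hB => ?_⟩
  · refine disjoint_left.2 ?_
    rintro _ ⟨u, hu, rfl⟩ ⟨v, hv, huv⟩
    have : v = u := by rw [← hinv j v hv, ← hinv i u hu, huv]
    exact disjoint_left.1 (hGdisj i j hij) hu (this ▸ hv)
  · obtain ⟨j₀, hj₀⟩ := hG B hB
    refine ⟨j₀, fun j hj => ?_⟩
    obtain ⟨δ, hδ, u, hu, hsub⟩ := hj₀ j hj
    exact ⟨_, mem_image_of_mem _ hu, δ, hδ, (hinv j u hu).symm ▸ hsub⟩

end BsGroupable

namespace S1_GN

lemma s1_O (hGN : S1_GN 𝔅) : S1_O 𝔅 := fun U hU =>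
  let ⟨f, hf, hg⟩ := hGN U hU
  ⟨f, hf, hg.bsCover fun ⟨n, hn⟩ => (hU n).2.1 (hn ▸ hf n)⟩

lemma bsHurewicz (hGN : S1_GN 𝔅) : BsHurewicz 𝔅 := by
  intro U hU
  obtain ⟨g, hg, hgp⟩ := hGN _ (bsCover_biInter_Iic hU)
  choose c hc hgc using hg
  obtain ⟨K, hKfin, hKdisj, hK⟩ := hgp.exists_index_groups
  refine ⟨fun n => (c · n) '' ⋃ j ≤ 2 * n, K j, fun n => image_subset_iff.2 fun k _ => hc k n,
    fun n => ((finite_Iic _).biUnion fun j _ => hKfin j).image _, fun B hB => ?_⟩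
  obtain ⟨j₀, hj₀⟩ := hK B hB
  refine ⟨j₀, fun n hn => ?_⟩
  set S := {k | ∃ δ > 0, enl B δ ⊆ g k}
  have hgood : ∀ j ∈ Icc j₀ (2 * n), (K j ∩ S).Nonempty := fun j hj => hj₀ j hj.1
  obtain ⟨j, hj, k, ⟨hkK, δ, hδ, hsub⟩, hnk⟩ :=
    Nat.exists_mem_Icc_le_of_pairwise_disjoint (K := (K · ∩ S))
      (fun i j hij => (hKdisj hij).mono inter_subset_left inter_subset_left)
      (by omega : j₀ + n ≤ 2 * n) hgood
  refine ⟨δ, hδ, c k n, mem_image_of_mem _ (mem_biUnion hj.2 hkK), hsub.trans ?_⟩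
  exact hgc k ▸ iInter₂_subset n (Finset.mem_Iic.2 hnk)

end S1_GN

lemma BsHurewicz.bsGroupable_range_of_injective [Nonempty X] (hb : IsBornologyOn 𝔅)
    (hH : BsHurewicz 𝔅) {e : ℕ → Set X} (he : Injective e) (hc : BsCover 𝔅 (range e)) :
    BsGroupable 𝔅 (range e) := by
  obtain ⟨V, hVsub, hVfin, hV⟩ := hH _ (hc.image_Ici hb)
  have hpre : ∀ n, e ⁻¹' V n ⊆ Ici n := fun n i hi => by
    obtain ⟨i', hi', hii'⟩ := hVsub n hi
    exact he hii' ▸ hi'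
  obtain ⟨m, hm, hm0, hmV⟩ := Nat.exists_strictMono_forall_subset_Ico
    (fun n => (hVfin n).preimage he.injOn) hpre
  refine ⟨hc.1, hc.sUnion_eq_univ hb, fun k => e '' Ico (m k) (m (k + 1)),
    fun k => (finite_Ico _ _).image e,
    fun i j hij => (disjoint_image_iff he).2 (hm.monotone.pairwise_disjoint_on_Ico_succ hij),
    by rw [← image_iUnion, hm.iUnion_Ico_eq_univ hm0, image_univ], fun B hB => ?_⟩
  obtain ⟨n₀, hn₀⟩ := hV B hB
  refine ⟨n₀, fun k hk => ?_⟩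
  obtain ⟨δ, hδ, u, hu, hsub⟩ := hn₀ (m k) (hk.trans hm.le_apply)
  obtain ⟨i, -, rfl⟩ := hVsub _ hu
  exact ⟨δ, hδ, e i, mem_image_of_mem e (hmV k hu), hsub⟩

lemma BsCover.bsGroupable_of_countable [Nonempty X] {𝒰 : Set (Set X)} (hb : IsBornologyOn 𝔅)
    (hH : BsHurewicz 𝔅) (hc : BsCover 𝔅 𝒰) (h𝒰 : 𝒰.Countable) : BsGroupable 𝔅 𝒰 := by
  obtain ⟨e, he, rfl⟩ := h𝒰.exists_injective_range_eq (hc.infinite hb)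
  exact hH.bsGroupable_range_of_injective hb he hc

end Metric

theorem stmt16_general {X : Type*} [MetricSpace X]
    (𝔅 : Set (Set X)) (hb : IsBornologyOn 𝔅) :
    S1_GN 𝔅 ↔ (BsHurewicz 𝔅 ∧ S1_O 𝔅) := by
  refine ⟨fun hGN => ⟨hGN.bsHurewicz, hGN.s1_O⟩, fun ⟨hH, hS⟩ U hU => ?_⟩
  obtain ⟨f, hf, hcov⟩ := hS U hU
  cases isEmpty_or_nonempty X
  · exact absurd (Subsingleton.elim (f 0) univ ▸ hf 0) (hU 0).2.1
  · exact ⟨f, hf, hcov.bsGroupable_of_countable hb hH (countable_range f)⟩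

theorem stmt16 {X : Type*} [MetricSpace X]
    (𝔅 𝔅₀ : Set (Set X)) (hb : IsBornologyOn 𝔅) (hbase : IsBaseFor 𝔅 𝔅₀)
    (hcl : ∀ B ∈ 𝔅₀, IsClosed B) :
    S1_GN 𝔅 ↔ (BsHurewicz 𝔅 ∧ S1_O 𝔅) :=
  stmt16_general 𝔅 hb
end

section
/- Let 𝔅 be a bornology on a metric space X with closed base, and let C(X) carry the topology τ^s_𝔅 of strong uniform convergence. If A = {fₙ : n ∈ ℕ} ⊆ C(X) is a sequence converging to the zero function 0̄ in τ^s_𝔅, then for every neighbourhood U of 0 in ℝ, the family {fₙ⁻¹(U) : n ∈ ℕ} is a γ_{𝔅^s}-cover of X (provided X ∉ {fₙ⁻¹(U)}). -/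
def TendstoZeroS {α : Type*} [MetricSpace α] (𝔅 : Set (Set α)) (f : ℕ → α → ℝ) : Prop :=
  ∀ B ∈ 𝔅, ∀ ε > 0, ∀ᶠ n in Filter.atTop, ∃ δ > 0, ∀ x ∈ enl B δ, |f n x| < ε

theorem stmt18 {X : Type*} [MetricSpace X]
    (𝔅 𝔅₀ : Set (Set X)) (hb : IsBornologyOn 𝔅) (hbase : IsBaseFor 𝔅 𝔅₀)
    (hcl : ∀ B ∈ 𝔅₀, IsClosed B)
    (f : ℕ → X → ℝ) (hf : ∀ n, Continuous (f n))
    (hconv : TendstoZeroS 𝔅 f)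
    (U : Set ℝ) (hUopen : IsOpen U) (hU0 : (0 : ℝ) ∈ U)
    (hne : ∀ n, f n ⁻¹' U ≠ Set.univ) :
    GammaBsCover 𝔅 (fun n => f n ⁻¹' U) := by
  obtain ⟨ε, hε, hball⟩ := Metric.isOpen_iff.mp hUopen 0 hU0
  have hsub : ∀ y : ℝ, |y| < ε → y ∈ U := by
    intro y hy
    apply hball
    simpa [Real.dist_eq] using hy
  refine ⟨fun n => (hUopen.preimage (hf n)), ?_, ?_⟩
  · intro x
    obtain ⟨B, hB, hxB⟩ := Set.mem_sUnion.mp (hb.1 ▸ Set.mem_univ x)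
    have hx𝔅 : ({x} : Set X) ∈ 𝔅 := hb.2.1 B hB {x} (Set.singleton_subset_iff.mpr hxB)
    obtain ⟨n, δ, hδ, hall⟩ := (hconv {x} hx𝔅 ε hε).exists
    refine ⟨n, hsub _ (hall x ?_)⟩
    exact Set.mem_biUnion rfl (Metric.mem_ball_self hδ)
  · intro B hB
    obtain ⟨n₀, hn₀⟩ := (hconv B hB ε hε).exists_forall_of_atTop
    refine ⟨n₀, fun n hn => ?_⟩
    obtain ⟨δ, hδ, hall⟩ := hn₀ n hn
    exact ⟨δ, hδ, fun x hx => hsub _ (hall x hx)⟩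
end

section
/- Let 𝔅 be a bornology on a metric space X with closed base. If X satisfies S₁(Γ_{𝔅^s}, Γ_{𝔅^s}), then the function space (C(X), τ^s_𝔅) satisfies S₁(Σ_{0̄}, Σ_{0̄}): for every sequence (Aₙ) of sequences in C(X) each converging to the zero function 0̄ in τ^s_𝔅, one can select gₙ ∈ Aₙ so that (gₙ) converges to 0̄ in τ^s_𝔅. -/
theorem stmt19 {X : Type*} [MetricSpace X]
    (𝔅 𝔅₀ : Set (Set X)) (hb : IsBornologyOn 𝔅) (hbase : IsBaseFor 𝔅 𝔅₀)
    (hcl : ∀ B ∈ 𝔅₀, IsClosed B)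
    (hsel : S1_Gamma 𝔅)
    (A : ℕ → ℕ → X → ℝ) (hA : ∀ n k, Continuous (A n k))
    (hconv : ∀ n, TendstoZeroS 𝔅 (A n)) :
    ∃ g : ℕ → ℕ, TendstoZeroS 𝔅 (fun n => A n (g n)) := by
  set U : ℕ → ℕ → Set X := fun n k => {x | |A n k x| < 1 / (n + 1)} with hU
  have hεpos : ∀ n : ℕ, (0:ℝ) < 1 / (n + 1) := fun n => by positivity
  have hsingle : ∀ x : X, {x} ∈ 𝔅 := by
    intro x
    obtain ⟨B, hB, hxB⟩ : ∃ B ∈ 𝔅, x ∈ B := by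
      have := hb.1
      have hx : x ∈ ⋃₀ 𝔅 := by rw [this]; trivial
      simpa using hx
    exact hb.2.1 B hB {x} (by simpa using hxB)
  have hcov : ∀ n, GammaBsCover 𝔅 (U n) := by
    intro n
    refine ⟨?_, ?_, ?_⟩
    · intro k
      exact isOpen_Iio.preimage (continuous_abs.comp (hA n k))
    · intro x
      obtain ⟨k, hk⟩ := ((hconv n {x} (hsingle x) (1 / (n + 1)) (hεpos n)).exists)
      obtain ⟨δ, hδ, hprop⟩ := hk
      refine ⟨k, hprop x ?_⟩
      simp [enl, Metric.mem_ball, hδ]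
    · intro B hB
      obtain ⟨n₀, hn₀⟩ := Filter.eventually_atTop.mp
        (hconv n B hB (1 / (n + 1)) (hεpos n))
      refine ⟨n₀, fun k hk => ?_⟩
      obtain ⟨δ, hδ, hprop⟩ := hn₀ k hk
      exact ⟨δ, hδ, fun x hx => hprop x hx⟩
  obtain ⟨g, hg⟩ := hsel U hcov
  refine ⟨g, ?_⟩
  intro B hB ε hε
  obtain ⟨n₀, hn₀⟩ := hg.2.2 B hB
  obtain ⟨N, hN⟩ := exists_nat_one_div_lt hε
  rw [Filter.eventually_atTop]
  refine ⟨max n₀ N, fun n hn => ?_⟩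
  obtain ⟨δ, hδ, hsub⟩ := hn₀ n (le_trans (le_max_left _ _) hn)
  refine ⟨δ, hδ, fun x hx => ?_⟩
  have h1 : |A n (g n) x| < 1 / (n + 1) := hsub hx
  have h2 : (1:ℝ) / (n + 1) ≤ 1 / (N + 1) := by
    apply one_div_le_one_div_of_le (by positivity)
    have : (N:ℝ) ≤ n := by exact_mod_cast le_trans (le_max_right _ _) hn
    linarith
  calc |A n (g n) x| < 1 / (n + 1) := h1
    _ ≤ 1 / (N + 1) := h2
    _ < ε := hN
end
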